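/- arXiv:2410.02935 — 2 statements merged into one kernel-verified Lean document; each statement's English description precedes it below -/
import Mathlib

section
/- There exist real numbers p₁, p₂, p₃, q_{4,1}, q_{4,2}, q_{4,3}, q_{5,1}, q_{5,2}, q_{5,3} with p_i ≠ 0 for all i and q_{4i} ≠ 0 for at least one i, satisfying for every ρ ∈ {1, 2, 3, 4, 5} the equation Σ_{i=1}^3 Σ_{α₄+2α₅=ρ, α₄,α₅∈ℕ} (1/(α₄!·α₅!)) · p_i² · q_{4i}^{α₄} · q_{5i}^{α₅} = 0; in particular (taking q_{1i} = q₂ = q_{3i} = 0), the Softmax–Softmax polynomial system of order r = 5 with m = 3 blocks admits a non-trivial solution for every d ≥ 1, so r^SS(3) > 5. -/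
/-!
Write `cᵢ = pᵢ²`. The reduced equation of order `ρ` is the coefficient of `t ^ ρ` in
`∑ᵢ cᵢ exp (q₄ᵢ t + q₅ᵢ t²)`. The Softmax–Softmax equations with `ρ₁ = 0` are exactly the reduced
ones, and `q₁ = q₂ = q₃ = 0` makes all the others vanish, so both systems have non-trivial
solutions for the same orders; at order 5 one is written down explicitly.

Since `rSS` is an `sInf` (which is `0` for the empty set), `5 < rSS 3 d` also needs an order
without non-trivial solutions. By the Hilbert basis theorem the reduced equations up to some
order `N` imply all the others. A non-trivial common solution of all of them would make
`∑ᵢ cᵢ exp (q₄ᵢ t + q₅ᵢ t²)` constant, which is impossible when some `q₄ₖ ≠ 0`: as `t → ∞`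
either one term blows up, or the sum tends to the sum of the `cᵢ` with `q₄ᵢ = q₅ᵢ = 0`,
which misses `cₖ`.
-/

noncomputable section

/-- Multi-index `v ^ α := ∏ j, v j ^ α j`. -/
def mpow {d : ℕ} (v : Fin d → ℝ) (α : Fin d → ℕ) : ℝ := ∏ j, v j ^ α j

/-- Multi-index factorial `α! := ∏ j, (α j)!`. -/
def mfact {d : ℕ} (α : Fin d → ℕ) : ℕ := ∏ j, Nat.factorial (α j)

/-- Multi-index degree `|α| := ∑ j, α j`. -/
def mdeg {d : ℕ} (α : Fin d → ℕ) : ℕ := ∑ j, α j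

/-- A finite box containing every multi-index `α ≤ ρ` (coordinatewise). -/
def mIdxBox {d : ℕ} (ρ : Fin d → ℕ) : Finset (Fin d → ℕ) :=
  Fintype.piFinset fun j => Finset.range (ρ j + 1)

/-- Left-hand side of the Softmax–Softmax polynomial equation indexed by `(ρ₁, ρ₂)`:
`∑ i ∑_{α₁+α₂+α₃=ρ₁, |α₃|+α₄+2α₅=ρ₂} p_i² q_{1i}^{α₁} q₂^{α₂} q_{3i}^{α₃} q_{4i}^{α₄} q_{5i}^{α₅}
  / (α₁! α₂! α₃! α₄! α₅!)`. -/
def ssLHS {m d : ℕ} (p : Fin m → ℝ) (q1 : Fin m → Fin d → ℝ) (q2 : Fin d → ℝ)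
    (q3 : Fin m → Fin d → ℝ) (q4 q5 : Fin m → ℝ) (ρ1 : Fin d → ℕ) (ρ2 : ℕ) : ℝ :=
  ∑ i : Fin m, ∑ α1 ∈ mIdxBox ρ1, ∑ α2 ∈ mIdxBox ρ1, ∑ α3 ∈ mIdxBox ρ1,
    ∑ α4 ∈ Finset.range (ρ2 + 1), ∑ α5 ∈ Finset.range (ρ2 + 1),
      if α1 + α2 + α3 = ρ1 ∧ mdeg α3 + α4 + 2 * α5 = ρ2 then
        (1 / ((mfact α1 : ℝ) * (mfact α2 : ℝ) * (mfact α3 : ℝ) *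
            (Nat.factorial α4 : ℝ) * (Nat.factorial α5 : ℝ))) *
          p i ^ 2 * mpow (q1 i) α1 * mpow q2 α2 * mpow (q3 i) α3 *
          q4 i ^ α4 * q5 i ^ α5
      else 0

/-- The Softmax–Softmax system of order `r` (with `m` blocks, in dimension `d`)
admits a non-trivial solution: all `p_i ≠ 0`, some `q_{4i} ≠ 0`, and every equation
indexed by `(ρ₁, ρ₂)` with `1 ≤ |ρ₁| + ρ₂ ≤ r` holds. -/
def ssHasNontrivial (m d r : ℕ) : Prop :=
  ∃ (p : Fin m → ℝ) (q1 : Fin m → Fin d → ℝ) (q2 : Fin d → ℝ)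
    (q3 : Fin m → Fin d → ℝ) (q4 q5 : Fin m → ℝ),
      (∀ i, p i ≠ 0) ∧ (∃ i, q4 i ≠ 0) ∧
      ∀ (ρ1 : Fin d → ℕ) (ρ2 : ℕ), 1 ≤ mdeg ρ1 + ρ2 → mdeg ρ1 + ρ2 ≤ r →
        ssLHS p q1 q2 q3 q4 q5 ρ1 ρ2 = 0


/-- `r^SS(m)`: the smallest `r` such that the Softmax–Softmax system of order `r`
with `m` blocks (in dimension `d`) admits no non-trivial solution. -/
def rSS (m d : ℕ) : ℕ := sInf {r : ℕ | ¬ ssHasNontrivial m d r}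

/-- Left-hand side of the reduced polynomial equation indexed by `ρ`:
`∑ i ∑_{α₄+2α₅=ρ} (1/(α₄! α₅!)) p_i² q_{4i}^{α₄} q_{5i}^{α₅}`. -/
def redLHS {m : ℕ} (p q4 q5 : Fin m → ℝ) (ρ : ℕ) : ℝ :=
  ∑ i : Fin m, ∑ α4 ∈ Finset.range (ρ + 1), ∑ α5 ∈ Finset.range (ρ + 1),
    if α4 + 2 * α5 = ρ then
      (1 / ((Nat.factorial α4 : ℝ) * (Nat.factorial α5 : ℝ))) *
        p i ^ 2 * q4 i ^ α4 * q5 i ^ α5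
    else 0

open Finset Filter Real Topology
open scoped Nat

def redHasNontrivial (m r : ℕ) : Prop :=
  ∃ p q4 q5 : Fin m → ℝ, (∀ i, p i ≠ 0) ∧ (∃ i, q4 i ≠ 0) ∧
    ∀ ρ : ℕ, 1 ≤ ρ → ρ ≤ r → redLHS p q4 q5 ρ = 0

theorem redHasNontrivial.mono {m r s : ℕ} (hrs : r ≤ s) (h : redHasNontrivial m s) :
    redHasNontrivial m r :=
  let ⟨p, q4, q5, hp, hq4, hred⟩ := h
  ⟨p, q4, q5, hp, hq4, fun ρ h1 h2 => hred ρ h1 (h2.trans hrs)⟩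

lemma mdeg_zero {d : ℕ} : mdeg (0 : Fin d → ℕ) = 0 := by simp [mdeg]

lemma mIdxBox_zero {d : ℕ} : mIdxBox (0 : Fin d → ℕ) = {0} := by
  ext α
  simp [mIdxBox, funext_iff]

lemma mpow_zero_left_of_ne_zero {d : ℕ} {α : Fin d → ℕ} (hα : α ≠ 0) : mpow 0 α = 0 := by
  obtain ⟨j, hj⟩ := Function.ne_iff.mp hα
  exact prod_eq_zero (mem_univ j) (by simpa using hj)

lemma ssLHS_zero_left {m d : ℕ} (p : Fin m → ℝ) (q1 : Fin m → Fin d → ℝ) (q2 : Fin d → ℝ)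
    (q3 : Fin m → Fin d → ℝ) (q4 q5 : Fin m → ℝ) (ρ : ℕ) :
    ssLHS p q1 q2 q3 q4 q5 0 ρ = redLHS p q4 q5 ρ := by
  simp [ssLHS, redLHS, mIdxBox_zero, mdeg_zero, mpow, mfact]

lemma ssLHS_zero_zero_zero {m d : ℕ} (p q4 q5 : Fin m → ℝ) {ρ1 : Fin d → ℕ} (hρ1 : ρ1 ≠ 0)
    (ρ2 : ℕ) : ssLHS p 0 0 0 q4 q5 ρ1 ρ2 = 0 := by
  refine sum_eq_zero fun i _ => sum_eq_zero fun α1 _ => sum_eq_zero fun α2 _ =>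
    sum_eq_zero fun α3 _ => sum_eq_zero fun α4 _ => sum_eq_zero fun α5 _ => ?_
  split_ifs with h
  · have hα : α1 ≠ 0 ∨ α2 ≠ 0 ∨ α3 ≠ 0 := by
      by_contra! h0
      obtain ⟨rfl, rfl, rfl⟩ := h0
      exact hρ1 (by simpa using h.1.symm)
    rcases hα with hα | hα | hα <;> simp [mpow_zero_left_of_ne_zero hα]
  · rfl

theorem ssHasNontrivial_iff_redHasNontrivial {m d r : ℕ} :
    ssHasNontrivial m d r ↔ redHasNontrivial m r := by
  constructor
  · rintro ⟨p, q1, q2, q3, q4, q5, hp, hq4, hsys⟩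
    refine ⟨p, q4, q5, hp, hq4, fun ρ h1 h2 => ?_⟩
    rw [← ssLHS_zero_left p q1 q2 q3]
    exact hsys 0 ρ (by rwa [mdeg_zero, zero_add]) (by rwa [mdeg_zero, zero_add])
  · rintro ⟨p, q4, q5, hp, hq4, hred⟩
    refine ⟨p, 0, 0, 0, q4, q5, hp, hq4, fun ρ1 ρ2 h1 h2 => ?_⟩
    rcases eq_or_ne ρ1 0 with rfl | hρ1
    · rw [mdeg_zero, zero_add] at h1 h2
      rw [ssLHS_zero_left]
      exact hred ρ2 h1 h2
    · exact ssLHS_zero_zero_zero p q4 q5 hρ1 ρ2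

def expQuadCoeff (u v : ℝ) (n : ℕ) : ℝ :=
  ∑ a ∈ range (n + 1), ∑ b ∈ range (n + 1),
    if a + 2 * b = n then u ^ a / a ! * (v ^ b / b !) else 0

lemma tsum_fiber_add_two_mul {α : Type*} [AddCommMonoid α] [TopologicalSpace α]
    (F : ℕ × ℕ → α) (n : ℕ) :
    ∑' x : (fun x : ℕ × ℕ => x.1 + 2 * x.2) ⁻¹' {n}, F x =
      ∑ a ∈ range (n + 1), ∑ b ∈ range (n + 1), if a + 2 * b = n then F (a, b) else 0 := by
  classical
  rw [_root_.tsum_subtype, tsum_eq_sum (s := range (n + 1) ×ˢ range (n + 1)), sum_product]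
  · simp only [Set.indicator_apply, Set.mem_preimage, Set.mem_singleton_iff]
  · intro x hx
    rw [Set.indicator_of_notMem]
    simp only [mem_product, mem_range, not_and_or, not_lt] at hx
    simp only [Set.mem_preimage, Set.mem_singleton_iff]
    omega

theorem hasSum_expQuadCoeff_mul_pow (u v t : ℝ) :
    HasSum (fun n => expQuadCoeff u v n * t ^ n) (exp (u * t + v * t ^ 2)) := by
  have hexp (x : ℝ) : HasSum (fun n : ℕ => x ^ n / (n ! : ℝ)) (exp x) := by
    rw [Real.exp_eq_exp_ℝ]
    exact NormedSpace.expSeries_div_hasSum_exp x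
  have hsummable (x : ℝ) : Summable fun n : ℕ => ‖x ^ n / (n ! : ℝ)‖ :=
    summable_norm_iff.mpr (Real.summable_pow_div_factorial x)
  have hprod := (hexp (u * t)).mul (hexp (v * t ^ 2))
    (summable_mul_of_summable_norm (hsummable (u * t)) (hsummable (v * t ^ 2)))
  rw [Real.exp_add]
  refine (hprod.tsum_fiberwise fun x => x.1 + 2 * x.2).congr_fun fun n => ?_
  refine Eq.trans ?_ (tsum_fiber_add_two_mul
    (fun x : ℕ × ℕ => (u * t) ^ x.1 / (x.1 ! : ℝ) * ((v * t ^ 2) ^ x.2 / (x.2 ! : ℝ))) n).symm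
  rw [expQuadCoeff, sum_mul]
  refine sum_congr rfl fun a _ => ?_
  rw [sum_mul]
  refine sum_congr rfl fun b _ => ?_
  split_ifs with h
  · subst h; ring
  · simp

lemma redLHS_eq_sum_expQuadCoeff {m : ℕ} (p q4 q5 : Fin m → ℝ) (n : ℕ) :
    redLHS p q4 q5 n = ∑ i, p i ^ 2 * expQuadCoeff (q4 i) (q5 i) n := by
  simp only [redLHS, expQuadCoeff, mul_sum, mul_ite, mul_zero]
  refine sum_congr rfl fun i _ => sum_congr rfl fun a _ => sum_congr rfl fun b _ => ?_
  split_ifs <;> ring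

lemma redLHS_zero {m : ℕ} (p q4 q5 : Fin m → ℝ) : redLHS p q4 q5 0 = ∑ i, p i ^ 2 := by
  simp [redLHS]

theorem sum_sq_mul_exp_eq_of_redLHS_eq_zero {m : ℕ} {p q4 q5 : Fin m → ℝ}
    (h : ∀ ρ, 1 ≤ ρ → redLHS p q4 q5 ρ = 0) (t : ℝ) :
    ∑ i, p i ^ 2 * exp (q4 i * t + q5 i * t ^ 2) = ∑ i, p i ^ 2 := by
  have hseries : HasSum (fun n => redLHS p q4 q5 n * t ^ n)
      (∑ i, p i ^ 2 * exp (q4 i * t + q5 i * t ^ 2)) := by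
    simp only [redLHS_eq_sum_expQuadCoeff, sum_mul, mul_assoc]
    exact hasSum_sum fun i _ => (hasSum_expQuadCoeff_mul_pow _ _ t).mul_left _
  refine hseries.unique (hasSum_single 0 fun n hn => ?_) |>.trans ?_
  · rw [h n (Nat.one_le_iff_ne_zero.mpr hn), zero_mul]
  · simp [redLHS_zero]

lemma tendsto_mul_add_mul_sq_trichotomy (u v : ℝ) :
    Tendsto (fun t => u * t + v * t ^ 2) atTop atTop ∨
      Tendsto (fun t => u * t + v * t ^ 2) atTop atBot ∨ (u = 0 ∧ v = 0) := by
  have hfactor : (fun t : ℝ => u * t + v * t ^ 2) = fun t => t * (u + v * t) := by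
    funext t; ring
  rcases lt_trichotomy v 0 with hv | rfl | hv
  · right; left
    rw [hfactor]
    exact tendsto_id.atTop_mul_atBot₀ <|
      tendsto_atBot_add_const_left _ u (tendsto_id.const_mul_atTop_of_neg hv)
  · rcases lt_trichotomy u 0 with hu | rfl | hu
    · right; left
      simpa using tendsto_id.const_mul_atTop_of_neg hu
    · simp
    · left
      simpa using tendsto_id.const_mul_atTop hu
  · left
    rw [hfactor]
    exact tendsto_id.atTop_mul_atTop₀ <|
      tendsto_atTop_add_const_left _ u (tendsto_id.const_mul_atTop hv)

theorem exists_sum_mul_exp_ne_sum {ι : Type*} [Fintype ι] {c u v : ι → ℝ} (hc : ∀ i, 0 < c i)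
    {k : ι} (hk : u k ≠ 0) : ∃ t, ∑ i, c i * exp (u i * t + v i * t ^ 2) ≠ ∑ i, c i := by
  by_contra! hconst
  by_cases hgrow : ∃ i, Tendsto (fun t => u i * t + v i * t ^ 2) atTop atTop
  · obtain ⟨i, hi⟩ := hgrow
    have hterm : Tendsto (fun t => c i * exp (u i * t + v i * t ^ 2)) atTop atTop :=
      (tendsto_exp_atTop.comp hi).const_mul_atTop (hc i)
    obtain ⟨t, ht⟩ := (hterm.eventually_gt_atTop (∑ j, c j)).exists
    have hle : c i * exp (u i * t + v i * t ^ 2) ≤ ∑ j, c j * exp (u j * t + v j * t ^ 2) :=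
      single_le_sum (f := fun j => c j * exp (u j * t + v j * t ^ 2))
        (fun j _ => (mul_pos (hc j) (exp_pos _)).le) (mem_univ i)
    linarith [hconst t]
  · simp only [not_exists] at hgrow
    set L : ι → ℝ := fun i => if u i = 0 ∧ v i = 0 then c i else 0
    have hlim (i : ι) : Tendsto (fun t => c i * exp (u i * t + v i * t ^ 2)) atTop (𝓝 (L i)) := by
      by_cases hi : u i = 0 ∧ v i = 0
      · simp [L, hi.1, hi.2]
      · rcases tendsto_mul_add_mul_sq_trichotomy (u i) (v i) with h | h | h
        · exact absurd h (hgrow i)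
        · simpa [L, hi] using (tendsto_exp_atBot.comp h).const_mul (c i)
        · exact absurd h hi
    have hsum_eq : ∑ i, L i = ∑ i, c i :=
      tendsto_nhds_unique (tendsto_finsetSum _ fun i _ => hlim i)
        (tendsto_const_nhds.congr fun t => (hconst t).symm)
    have hsum_lt : ∑ i, L i < ∑ i, c i := by
      refine sum_lt_sum (fun i _ => ?_) ⟨k, mem_univ k, ?_⟩
      · simp only [L]; split_ifs
        exacts [le_rfl, (hc i).le]
      · simpa [L, hk] using hc k
    exact hsum_lt.ne hsum_eq

open MvPolynomial in
def redPoly (m ρ : ℕ) : MvPolynomial (Fin 3 × Fin m) ℝ :=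
  ∑ i : Fin m, ∑ a ∈ range (ρ + 1), ∑ b ∈ range (ρ + 1),
    if a + 2 * b = ρ then
      C (1 / ((a ! : ℝ) * b !)) * X (0, i) ^ 2 * X (1, i) ^ a * X (2, i) ^ b
    else 0

lemma eval_redPoly {m : ℕ} (p q4 q5 : Fin m → ℝ) (ρ : ℕ) :
    MvPolynomial.eval (fun x => ![p, q4, q5] x.1 x.2) (redPoly m ρ) = redLHS p q4 q5 ρ := by
  simp [redPoly, redLHS, apply_ite]

theorem IsNoetherianRing.exists_mem_span_image_Iic {A : Type*} [CommSemiring A]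
    [IsNoetherianRing A] (f : ℕ → A) : ∃ N, ∀ n, f n ∈ Ideal.span (f '' Set.Iic N) := by
  let J : ℕ →o Ideal A := ⟨fun N => Ideal.span (f '' Set.Iic N),
    fun _ _ hab => Ideal.span_mono (Set.image_mono (Set.Iic_subset_Iic.mpr hab))⟩
  obtain ⟨N, hN⟩ := monotone_stabilizes_iff_noetherian.mpr inferInstance J
  refine ⟨N, fun n => ?_⟩
  have hmem : f n ∈ J (max N n) := Ideal.subset_span ⟨n, le_max_right N n, rfl⟩
  rwa [← hN _ (le_max_left N n)] at hmem

theorem exists_not_redHasNontrivial (m : ℕ) : ∃ r, ¬ redHasNontrivial m r := by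
  obtain ⟨N, hN⟩ := IsNoetherianRing.exists_mem_span_image_Iic fun n => redPoly m (n + 1)
  refine ⟨N + 1, fun ⟨p, q4, q5, hp, ⟨k, hk⟩, hred⟩ => ?_⟩
  let x : Fin 3 × Fin m → ℝ := fun z => ![p, q4, q5] z.1 z.2
  have hspan : Ideal.span ((fun n => redPoly m (n + 1)) '' Set.Iic N) ≤
      RingHom.ker (MvPolynomial.eval x) := by
    rw [Ideal.span_le]
    rintro _ ⟨n, hn, rfl⟩
    rw [SetLike.mem_coe, RingHom.mem_ker, eval_redPoly]
    exact hred (n + 1) (by omega) (by simpa using hn)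
  have hall (ρ : ℕ) (hρ : 1 ≤ ρ) : redLHS p q4 q5 ρ = 0 := by
    obtain ⟨n, rfl⟩ := Nat.exists_eq_add_of_le' hρ
    rw [← eval_redPoly]
    exact hspan (hN n)
  obtain ⟨t, ht⟩ := exists_sum_mul_exp_ne_sum (c := fun i => p i ^ 2)
    (fun i => pow_two_pos_of_ne_zero (hp i)) hk
  exact ht (sum_sq_mul_exp_eq_of_redLHS_eq_zero hall t)

theorem lt_rSS_iff {m d r : ℕ} : r < rSS m d ↔ redHasNontrivial m r := by
  simp only [rSS, ssHasNontrivial_iff_redHasNontrivial]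
  obtain ⟨N, hN⟩ := exists_not_redHasNontrivial m
  constructor
  · intro hr
    by_contra h
    exact (Nat.sInf_le h).not_gt hr
  · intro h
    by_contra! hle
    exact Nat.sInf_mem (s := {r | ¬ redHasNontrivial m r}) ⟨N, hN⟩ (h.mono hle)

/- With `q₄ = (1, -1, 0)` and `q₅₁ = q₅₂` the equations of odd order cancel in pairs, and those of
order 2 and 4 become `h2` and `h4`. -/
theorem redHasNontrivial_three_five : redHasNontrivial 3 5 := by
  set c : ℝ := (√2 - 3) / 6
  set e : ℝ := -√2 / 3
  have hs : √2 ^ 2 = 2 := Real.sq_sqrt (by norm_num)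
  have h2 : 1 + 2 * c + e = 0 := by ring
  have h4 : 1 / 12 + c + c ^ 2 + e ^ 2 / 2 = 0 := by linear_combination hs / 12
  refine ⟨1, ![1, -1, 0], ![c, c, e], fun _ => one_ne_zero, ⟨0, by simp⟩, fun ρ h1 h5 => ?_⟩
  interval_cases ρ <;> simp [redLHS, Fin.sum_univ_three, sum_range_succ, Nat.factorial]
  · linear_combination h2
  · ring
  · linear_combination h4
  · ring

/-- There exist reals `p₁,p₂,p₃, q₄₁,q₄₂,q₄₃, q₅₁,q₅₂,q₅₃` with all `pᵢ ≠ 0` and some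
`q₄ᵢ ≠ 0` satisfying the reduced equations for every `ρ ∈ {1,…,5}`; in particular
(taking `q₁ᵢ = q₂ = q₃ᵢ = 0`) the Softmax–Softmax polynomial system of order `r = 5`
with `m = 3` blocks admits a non-trivial solution for every `d ≥ 1`, so `r^SS(3) > 5`. -/
theorem rSS_three_gt_five :
    (∃ p q4 q5 : Fin 3 → ℝ,
      (∀ i, p i ≠ 0) ∧ (∃ i, q4 i ≠ 0) ∧
      ∀ ρ : ℕ, 1 ≤ ρ → ρ ≤ 5 → redLHS p q4 q5 ρ = 0) ∧
    (∀ d : ℕ, 1 ≤ d → ssHasNontrivial 3 d 5 ∧ 5 < rSS 3 d) :=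
  ⟨redHasNontrivial_three_five, fun _ _ =>
    ⟨ssHasNontrivial_iff_redHasNontrivial.mpr redHasNontrivial_three_five,
      lt_rSS_iff.mpr redHasNontrivial_three_five⟩⟩
end
end

section
/- Parameter-perturbation bound for the Softmax–Softmax Gaussian HMoE density: fix d, k₁, k₂ ∈ ℕ, B > 0, K > 0 and 0 < ℓ ≤ u. There exists a constant C > 0 such that for any two parameter families (b, a, β, ω, η, τ, ν) and (b', a', β', ω', η', τ', ν') of a Softmax–Softmax Gaussian HMoE with k₁ groups and k₂ experts per group, with all norms ‖a_{i₁}‖, |b_{i₁}|, ‖ω_{i₂|i₁}‖, |β_{i₂|i₁}|, ‖η_{i₁i₂}‖, |τ_{i₁i₂}| ≤ K (and the same for the primed parameters) and all variances ν_{i₁i₂}, ν'_{i₁i₂} ∈ [ℓ, u], and for every x ∈ ℝ^d with ‖x‖ ≤ B and every y ∈ ℝ: |p^SS_G(y|x) − p^SS_{G'}(y|x)| ≤ C·[ Σ_{i₁=1}^{k₁} (‖a_{i₁}−a'_{i₁}‖ + |b_{i₁}−b'_{i₁}|) + Σ_{i₁=1}^{k₁} Σ_{i₂=1}^{k₂}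 (‖ω_{i₂|i₁}−ω'_{i₂|i₁}‖ + |β_{i₂|i₁}−β'_{i₂|i₁}| + ‖η_{i₁i₂}−η'_{i₁i₂}‖ + |τ_{i₁i₂}−τ'_{i₁i₂}| + |ν_{i₁i₂}−ν'_{i₁i₂}|) ]. -/
/-!
Every ingredient of the density is Lipschitz in its parameters. Along the segment
`t + s (t' - t)` the `i`-th softmax weight has derivative `σᵢ ((t' - t)ᵢ - ∑ⱼ σⱼ (t' - t)ⱼ)`,
so softmax is `2`-Lipschitz from `ℓ¹` to each coordinate. Once the variance is at least `ℓ`,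
the value and both partial derivatives of the Gaussian density are bounded, because
`(1 + x) e⁻ˣ ≤ 1`. Logits and means are affine in the parameters with slope at most `‖x‖ + 1`.
Since the density is a two-level softmax mixture, `σ q - σ' q' = (σ - σ') q + σ' (q - q')`
propagates these bounds from the experts to the groups and then to the whole density.
-/

open scoped RealInnerProductSpace

noncomputable section

/-- Euclidean input space `ℝ^d`. -/
abbrev Euc (d : ℕ) := EuclideanSpace ℝ (Fin d)

/-- Univariate Gaussian density `π(y|μ,ν) = (2πν)^(-1/2) exp(-(y-μ)²/(2ν))`. -/
def gaussPDF (m v y : ℝ) : ℝ :=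
  (Real.sqrt (2 * Real.pi * v))⁻¹ * Real.exp (-(y - m) ^ 2 / (2 * v))

/-- Parameters of a two-level Gaussian HMoE with `k1` groups and `k2` experts per group:
first-level gating parameters `(b_{i₁}, a_{i₁})`, second-level gating parameters
`(β_{i₂|i₁}, ω_{i₂|i₁})`, and expert parameters `(η_{i₁i₂}, τ_{i₁i₂}, ν_{i₁i₂})`. -/
structure HMoE (d k1 k2 : ℕ) where
  b : Fin k1 → ℝ
  a : Fin k1 → Euc d
  β : Fin k1 → Fin k2 → ℝ
  ω : Fin k1 → Fin k2 → Euc d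
  η : Fin k1 → Fin k2 → Euc d
  τ : Fin k1 → Fin k2 → ℝ
  ν : Fin k1 → Fin k2 → ℝ

/-- Conditional density of the Softmax–Softmax Gaussian HMoE. -/
def pSS {d k1 k2 : ℕ} (P : HMoE d k1 k2) (x : Euc d) (y : ℝ) : ℝ :=
  ∑ i1, (Real.exp (⟪P.a i1, x⟫ + P.b i1) /
      ∑ j1, Real.exp (⟪P.a j1, x⟫ + P.b j1)) *
    ∑ i2, (Real.exp (⟪P.ω i1 i2, x⟫ + P.β i1 i2) /
        ∑ j2, Real.exp (⟪P.ω i1 j2, x⟫ + P.β i1 j2)) *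
      gaussPDF (⟪P.η i1 i2, x⟫ + P.τ i1 i2) (P.ν i1 i2) y

open Real

section Softmax

variable {ι : Type*} [Fintype ι]

def softmax (t : ι → ℝ) (i : ι) : ℝ := exp (t i) / ∑ j, exp (t j)

lemma sum_exp_pos (t : ι → ℝ) (i : ι) : 0 < ∑ j, exp (t j) :=
  Finset.sum_pos (fun j _ => exp_pos (t j)) ⟨i, Finset.mem_univ i⟩

lemma softmax_nonneg (t : ι → ℝ) (i : ι) : 0 ≤ softmax t i := by
  unfold softmax; positivity

lemma sum_softmax_le_one (t : ι → ℝ) : ∑ i, softmax t i ≤ 1 := by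
  simp only [softmax, ← Finset.sum_div]
  exact div_self_le_one _

lemma softmax_le_one (t : ι → ℝ) (i : ι) : softmax t i ≤ 1 :=
  (Finset.single_le_sum (fun j _ => softmax_nonneg t j) (Finset.mem_univ i)).trans
    (sum_softmax_le_one t)

lemma hasDerivAt_softmax_add_mul (t h : ι → ℝ) (i : ι) (s : ℝ) :
    HasDerivAt (fun s => softmax (fun j => t j + s * h j) i)
      (softmax (fun j => t j + s * h j) i *
        (h i - ∑ j, softmax (fun j => t j + s * h j) j * h j)) s := by
  have hline (j : ι) :
      HasDerivAt (fun s => exp (t j + s * h j)) (exp (t j + s * h j) * h j) s := by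
    simpa using (((hasDerivAt_id s).mul_const (h j)).const_add (t j)).exp
  have hS := (sum_exp_pos (fun j => t j + s * h j) i).ne'
  refine ((hline i).div (HasDerivAt.fun_sum fun j _ => hline j) hS).congr_deriv ?_
  simp only [softmax, div_mul_eq_mul_div, ← Finset.sum_div]
  field_simp

lemma abs_softmax_sub_le (t t' : ι → ℝ) (i : ι) :
    |softmax t i - softmax t' i| ≤ 2 * ∑ j, |t j - t' j| := by
  set h := fun j => t' j - t j
  have hderiv_le (s : ℝ) :
      |softmax (fun j => t j + s * h j) i *
        (h i - ∑ j, softmax (fun j => t j + s * h j) j * h j)| ≤ 2 * ∑ j, |t j - t' j| := by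
    set σ := softmax (fun j => t j + s * h j)
    have hh : ∑ j, |h j| = ∑ j, |t j - t' j| := by simp only [h, abs_sub_comm]
    have hhi : |h i| ≤ ∑ j, |h j| :=
      Finset.single_le_sum (f := fun j => |h j|) (fun j _ => abs_nonneg _) (Finset.mem_univ i)
    have hmix : |∑ j, σ j * h j| ≤ ∑ j, |h j| := by
      refine (Finset.abs_sum_le_sum_abs _ _).trans (Finset.sum_le_sum fun j _ => ?_)
      rw [abs_mul, abs_of_nonneg (softmax_nonneg _ j)]
      exact mul_le_of_le_one_left (abs_nonneg _) (softmax_le_one _ j)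
    rw [abs_mul, abs_of_nonneg (softmax_nonneg _ i), ← hh]
    refine (mul_le_of_le_one_left (abs_nonneg _) (softmax_le_one _ i)).trans ?_
    linarith [abs_sub (h i) (∑ j, σ j * h j)]
  have hmvt := convex_univ.norm_image_sub_le_of_norm_hasDerivWithin_le
    (fun s _ => (hasDerivAt_softmax_add_mul t h i s).hasDerivWithinAt)
    (fun s _ => hderiv_le s) (Set.mem_univ 1) (Set.mem_univ 0)
  have h0 : (fun j => t j + 0 * h j) = t := by funext j; ring
  have h1 : (fun j => t j + 1 * h j) = t' := by funext j; simp only [h]; ring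
  simpa only [Real.norm_eq_abs, h0, h1, abs_sub_comm (softmax t' i), zero_sub, abs_neg,
    abs_one, mul_one] using hmvt

lemma abs_sum_softmax_mul_le (t q : ι → ℝ) {G : ℝ} (hG : 0 ≤ G)
    (hq : ∀ i, |q i| ≤ G) : |∑ i, softmax t i * q i| ≤ G := by
  calc |∑ i, softmax t i * q i| ≤ ∑ i, softmax t i * G := by
        refine (Finset.abs_sum_le_sum_abs _ _).trans (Finset.sum_le_sum fun i _ => ?_)
        rw [abs_mul, abs_of_nonneg (softmax_nonneg t i)]
        exact mul_le_mul_of_nonneg_left (hq i) (softmax_nonneg t i)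
    _ = (∑ i, softmax t i) * G := (Finset.sum_mul _ _ _).symm
    _ ≤ G := mul_le_of_le_one_left hG (sum_softmax_le_one t)

lemma abs_sum_softmax_mul_sub_le (t t' q q' : ι → ℝ) {G : ℝ}
    (hq : ∀ i, |q i| ≤ G) :
    |∑ i, softmax t i * q i - ∑ i, softmax t' i * q' i| ≤
      Fintype.card ι * (2 * G * ∑ j, |t j - t' j|) + ∑ i, |q i - q' i| := by
  have hterm (i : ι) : |softmax t i * q i - softmax t' i * q' i| ≤
      2 * G * ∑ j, |t j - t' j| + |q i - q' i| := by
    have hG : 0 ≤ G := (abs_nonneg _).trans (hq i)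
    rw [show softmax t i * q i - softmax t' i * q' i =
      (softmax t i - softmax t' i) * q i + softmax t' i * (q i - q' i) by ring]
    refine (abs_add_le _ _).trans (add_le_add ?_ ?_)
    · rw [abs_mul, mul_right_comm]
      exact mul_le_mul (abs_softmax_sub_le t t' i) (hq i) (abs_nonneg _) (by positivity)
    · rw [abs_mul, abs_of_nonneg (softmax_nonneg t' i)]
      exact mul_le_of_le_one_left (abs_nonneg _) (softmax_le_one t' i)
  calc |∑ i, softmax t i * q i - ∑ i, softmax t' i * q' i|
      ≤ ∑ i, |softmax t i * q i - softmax t' i * q' i| := by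
        rw [← Finset.sum_sub_distrib]; exact Finset.abs_sum_le_sum_abs _ _
    _ ≤ ∑ i, (2 * G * ∑ j, |t j - t' j| + |q i - q' i|) := Finset.sum_le_sum fun i _ => hterm i
    _ = Fintype.card ι * (2 * G * ∑ j, |t j - t' j|) + ∑ i, |q i - q' i| := by
        rw [Finset.sum_add_distrib, Finset.sum_const, Finset.card_univ, nsmul_eq_mul]

end Softmax

lemma abs_inner_add_sub_le {E : Type*} [NormedAddCommGroup E] [InnerProductSpace ℝ E]
    (a a' x : E) (b b' : ℝ) :
    |(⟪a, x⟫ + b) - (⟪a', x⟫ + b')| ≤ (‖x‖ + 1) * (‖a - a'‖ + |b - b'|) := by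
  rw [show (⟪a, x⟫ + b) - (⟪a', x⟫ + b') = ⟪a - a', x⟫ + (b - b') by rw [inner_sub_left]; ring]
  have hinner : |⟪a - a', x⟫| ≤ ‖a - a'‖ * ‖x‖ := abs_real_inner_le_norm _ _
  nlinarith [abs_add_le ⟪a - a', x⟫ (b - b'), norm_nonneg a', norm_nonneg (a - a'),
    norm_nonneg x, abs_nonneg (b - b')]

lemma sum_abs_inner_add_sub_le {ι E : Type*} [Fintype ι] [NormedAddCommGroup E]
    [InnerProductSpace ℝ E] (a a' : ι → E) (b b' : ι → ℝ) (x : E) :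
    ∑ j, |(⟪a j, x⟫ + b j) - (⟪a' j, x⟫ + b' j)| ≤
      (‖x‖ + 1) * ∑ j, (‖a j - a' j‖ + |b j - b' j|) := by
  rw [Finset.mul_sum]
  exact Finset.sum_le_sum fun j _ => abs_inner_add_sub_le _ _ _ _ _

def gaussConst (ℓ : ℝ) : ℝ := (√(2 * π * ℓ))⁻¹ * (1 + ℓ⁻¹)

lemma one_add_mul_exp_neg_le_one {x : ℝ} : (1 + x) * exp (-x) ≤ 1 := by
  rw [exp_neg, ← div_eq_mul_inv, div_le_one (exp_pos x)]
  linarith [add_one_le_exp x]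

lemma gaussConst_pos {ℓ : ℝ} (hℓ : 0 < ℓ) : 0 < gaussConst ℓ := by
  unfold gaussConst; positivity

/-- The density and its partial derivatives in the mean and in the variance all have the form
`gaussPDF m v y * r` with `r` bounded as in `hr`. -/
lemma abs_gaussPDF_mul_le {ℓ m v y r : ℝ} (hℓ : 0 < ℓ) (hv : ℓ ≤ v)
    (hr : |r| ≤ (1 + ℓ⁻¹) * (1 + (y - m) ^ 2 / (2 * v))) :
    |gaussPDF m v y * r| ≤ gaussConst ℓ := by
  have hv0 : 0 < v := hℓ.trans_le hv
  set x := (y - m) ^ 2 / (2 * v)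
  calc |gaussPDF m v y * r|
      = (√(2 * π * v))⁻¹ * (exp (-x) * |r|) := by
        rw [gaussPDF, neg_div, abs_mul, abs_mul, abs_of_nonneg (by positivity),
          abs_of_pos (exp_pos _), mul_assoc]
    _ ≤ (√(2 * π * ℓ))⁻¹ * (exp (-x) * ((1 + ℓ⁻¹) * (1 + x))) := by gcongr
    _ = (√(2 * π * ℓ))⁻¹ * ((1 + ℓ⁻¹) * ((1 + x) * exp (-x))) := by ring
    _ ≤ (√(2 * π * ℓ))⁻¹ * ((1 + ℓ⁻¹) * 1) := by
        gcongr; exact one_add_mul_exp_neg_le_one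
    _ = gaussConst ℓ := by rw [mul_one, gaussConst]

lemma abs_gaussPDF_le {ℓ m v y : ℝ} (hℓ : 0 < ℓ) (hv : ℓ ≤ v) :
    |gaussPDF m v y| ≤ gaussConst ℓ := by
  have hx : 0 ≤ (y - m) ^ 2 / (2 * v) := by have := hℓ.trans_le hv; positivity
  simpa using abs_gaussPDF_mul_le (r := 1) hℓ hv (by
    rw [abs_one]; nlinarith [inv_pos.2 hℓ])

lemma hasDerivAt_gaussPDF_mean (m v y : ℝ) :
    HasDerivAt (fun m => gaussPDF m v y) (gaussPDF m v y * ((y - m) / v)) m := by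
  have h := ((((hasDerivAt_id m).const_sub y).pow 2).neg.div_const (2 * v)).exp.const_mul
    (√(2 * π * v))⁻¹
  exact h.congr_deriv (by simp only [gaussPDF, id, Pi.pow_apply, Pi.neg_apply]; ring)

lemma hasDerivAt_gaussPDF_var (m y : ℝ) {v : ℝ} (hv : 0 < v) :
    HasDerivAt (fun v => gaussPDF m v y)
      (gaussPDF m v y * (((y - m) ^ 2 / (2 * v) - 2⁻¹) / v)) v := by
  have hpre := (((hasDerivAt_id v).const_mul (2 * π)).sqrt (by positivity)).inv
    (by positivity : √(2 * π * v) ≠ 0)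
  have hexp := ((((hasDerivAt_id v).const_mul 2).inv (by positivity)).const_mul
    (-(y - m) ^ 2)).exp
  refine (hpre.mul hexp).congr_deriv ?_
  simp only [gaussPDF, id, Pi.inv_apply]
  field_simp
  rw [sq_sqrt (by positivity)]
  ring

lemma abs_gaussPDF_sub_le_of_mean {ℓ v : ℝ} (m m' y : ℝ) (hℓ : 0 < ℓ) (hv : ℓ ≤ v) :
    |gaussPDF m v y - gaussPDF m' v y| ≤ gaussConst ℓ * |m - m'| := by
  have hv0 : 0 < v := hℓ.trans_le hv
  have hderiv_le (m : ℝ) : |gaussPDF m v y * ((y - m) / v)| ≤ gaussConst ℓ := by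
    refine abs_gaussPDF_mul_le hℓ hv ?_
    have hinv : v⁻¹ ≤ ℓ⁻¹ := inv_anti₀ hℓ hv
    have hx : 0 ≤ (y - m) ^ 2 / (2 * v) := by positivity
    have hamgm : |(y - m) / v| ≤ 2⁻¹ + v⁻¹ * ((y - m) ^ 2 / (2 * v)) := by
      have : v⁻¹ * ((y - m) ^ 2 / (2 * v)) = 2⁻¹ * ((y - m) / v) ^ 2 := by ring
      rw [this]
      nlinarith [sq_nonneg (|(y - m) / v| - 1), sq_abs ((y - m) / v)]
    nlinarith [mul_le_mul_of_nonneg_right hinv hx, inv_pos.2 hℓ]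
  simpa only [Real.norm_eq_abs] using convex_univ.norm_image_sub_le_of_norm_hasDerivWithin_le
    (fun m _ => (hasDerivAt_gaussPDF_mean m v y).hasDerivWithinAt)
    (fun m _ => hderiv_le m) (Set.mem_univ m') (Set.mem_univ m)

lemma abs_gaussPDF_sub_le_of_var {ℓ v v' : ℝ} (m y : ℝ) (hℓ : 0 < ℓ) (hv : ℓ ≤ v)
    (hv' : ℓ ≤ v') :
    |gaussPDF m v y - gaussPDF m v' y| ≤ gaussConst ℓ * |v - v'| := by
  have hderiv_le (w : ℝ) (hw : w ∈ Set.Ici ℓ) :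
      |gaussPDF m w y * (((y - m) ^ 2 / (2 * w) - 2⁻¹) / w)| ≤ gaussConst ℓ := by
    have hw0 : 0 < w := hℓ.trans_le hw
    refine abs_gaussPDF_mul_le hℓ hw ?_
    have hinv : w⁻¹ ≤ ℓ⁻¹ := inv_anti₀ hℓ hw
    have hx : 0 ≤ (y - m) ^ 2 / (2 * w) := by positivity
    rw [abs_div, abs_of_pos hw0, div_eq_inv_mul]
    calc w⁻¹ * |(y - m) ^ 2 / (2 * w) - 2⁻¹|
        ≤ ℓ⁻¹ * (1 + (y - m) ^ 2 / (2 * w)) := by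
          gcongr
          rw [abs_le]; constructor <;> linarith
      _ ≤ (1 + ℓ⁻¹) * (1 + (y - m) ^ 2 / (2 * w)) := by gcongr; linarith
  simpa only [Real.norm_eq_abs] using (convex_Ici ℓ).norm_image_sub_le_of_norm_hasDerivWithin_le
    (fun w hw => (hasDerivAt_gaussPDF_var m y (hℓ.trans_le hw)).hasDerivWithinAt)
    hderiv_le hv' hv

lemma abs_gaussPDF_sub_le {ℓ v v' : ℝ} (m m' y : ℝ) (hℓ : 0 < ℓ) (hv : ℓ ≤ v) (hv' : ℓ ≤ v') :
    |gaussPDF m v y - gaussPDF m' v' y| ≤ gaussConst ℓ * (|m - m'| + |v - v'|) := by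
  calc |gaussPDF m v y - gaussPDF m' v' y|
      ≤ |gaussPDF m v y - gaussPDF m' v y| + |gaussPDF m' v y - gaussPDF m' v' y| :=
        abs_sub_le _ _ _
    _ ≤ gaussConst ℓ * |m - m'| + gaussConst ℓ * |v - v'| :=
        add_le_add (abs_gaussPDF_sub_le_of_mean m m' y hℓ hv)
          (abs_gaussPDF_sub_le_of_var m' y hℓ hv hv')
    _ = gaussConst ℓ * (|m - m'| + |v - v'|) := (mul_add _ _ _).symm

namespace HMoE

variable {d k1 k2 : ℕ} {ℓ : ℝ}

def groupPDF (P : HMoE d k1 k2) (i1 : Fin k1) (x : Euc d) (y : ℝ) : ℝ :=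
  ∑ i2, softmax (fun j => ⟪P.ω i1 j, x⟫ + P.β i1 j) i2 *
    gaussPDF (⟪P.η i1 i2, x⟫ + P.τ i1 i2) (P.ν i1 i2) y

lemma pSS_eq_sum_groupPDF (P : HMoE d k1 k2) (x : Euc d) (y : ℝ) :
    pSS P x y = ∑ i1, softmax (fun j => ⟪P.a j, x⟫ + P.b j) i1 * P.groupPDF i1 x y := rfl

def paramDist (P P' : HMoE d k1 k2) : ℝ :=
  (∑ i1, (‖P.a i1 - P'.a i1‖ + |P.b i1 - P'.b i1|)) +
    ∑ i1, ∑ i2, (‖P.ω i1 i2 - P'.ω i1 i2‖ + |P.β i1 i2 - P'.β i1 i2| +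
      ‖P.η i1 i2 - P'.η i1 i2‖ + |P.τ i1 i2 - P'.τ i1 i2| + |P.ν i1 i2 - P'.ν i1 i2|)

lemma paramDist_nonneg (P P' : HMoE d k1 k2) : 0 ≤ P.paramDist P' := by
  unfold paramDist; positivity

lemma abs_groupPDF_le (P : HMoE d k1 k2) (hℓ : 0 < ℓ) (hν : ∀ i1 i2, ℓ ≤ P.ν i1 i2)
    (i1 : Fin k1) (x : Euc d) (y : ℝ) : |P.groupPDF i1 x y| ≤ gaussConst ℓ :=
  abs_sum_softmax_mul_le _ _ (gaussConst_pos hℓ).le fun i2 => abs_gaussPDF_le hℓ (hν i1 i2)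

lemma abs_expert_sub_le (P P' : HMoE d k1 k2) (hℓ : 0 < ℓ) (hν : ∀ i1 i2, ℓ ≤ P.ν i1 i2)
    (hν' : ∀ i1 i2, ℓ ≤ P'.ν i1 i2) (i1 : Fin k1) (i2 : Fin k2) (x : Euc d) (y : ℝ) :
    |gaussPDF (⟪P.η i1 i2, x⟫ + P.τ i1 i2) (P.ν i1 i2) y -
      gaussPDF (⟪P'.η i1 i2, x⟫ + P'.τ i1 i2) (P'.ν i1 i2) y| ≤
    gaussConst ℓ * (‖x‖ + 1) * (‖P.η i1 i2 - P'.η i1 i2‖ + |P.τ i1 i2 - P'.τ i1 i2| +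
      |P.ν i1 i2 - P'.ν i1 i2|) := by
  refine (abs_gaussPDF_sub_le _ _ y hℓ (hν i1 i2) (hν' i1 i2)).trans ?_
  have hmean := abs_inner_add_sub_le (P.η i1 i2) (P'.η i1 i2) x (P.τ i1 i2) (P'.τ i1 i2)
  have hvar : |P.ν i1 i2 - P'.ν i1 i2| ≤ (‖x‖ + 1) * |P.ν i1 i2 - P'.ν i1 i2| :=
    le_mul_of_one_le_left (abs_nonneg _) (by simp)
  rw [mul_assoc]
  refine mul_le_mul_of_nonneg_left ?_ (gaussConst_pos hℓ).le
  calc _ ≤ (‖x‖ + 1) * (‖P.η i1 i2 - P'.η i1 i2‖ + |P.τ i1 i2 - P'.τ i1 i2|) +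
        (‖x‖ + 1) * |P.ν i1 i2 - P'.ν i1 i2| := add_le_add hmean hvar
    _ = _ := by ring

lemma abs_groupPDF_sub_le (P P' : HMoE d k1 k2) (hℓ : 0 < ℓ) (hν : ∀ i1 i2, ℓ ≤ P.ν i1 i2)
    (hν' : ∀ i1 i2, ℓ ≤ P'.ν i1 i2) (i1 : Fin k1) (x : Euc d) (y : ℝ) :
    |P.groupPDF i1 x y - P'.groupPDF i1 x y| ≤
      gaussConst ℓ * (2 * k2 + 1) * (‖x‖ + 1) *
        ∑ i2, (‖P.ω i1 i2 - P'.ω i1 i2‖ + |P.β i1 i2 - P'.β i1 i2| +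
          ‖P.η i1 i2 - P'.η i1 i2‖ + |P.τ i1 i2 - P'.τ i1 i2| + |P.ν i1 i2 - P'.ν i1 i2|) := by
  have hL := gaussConst_pos hℓ
  have hs : 0 < ‖x‖ + 1 := by positivity
  set W := ∑ i2, (‖P.ω i1 i2 - P'.ω i1 i2‖ + |P.β i1 i2 - P'.β i1 i2|)
  set E := ∑ i2, (‖P.η i1 i2 - P'.η i1 i2‖ + |P.τ i1 i2 - P'.τ i1 i2| + |P.ν i1 i2 - P'.ν i1 i2|)
  have hW : 0 ≤ W := Finset.sum_nonneg fun _ _ => by positivity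
  have hE : 0 ≤ E := Finset.sum_nonneg fun _ _ => by positivity
  have hsum : ∑ i2, (‖P.ω i1 i2 - P'.ω i1 i2‖ + |P.β i1 i2 - P'.β i1 i2| +
      ‖P.η i1 i2 - P'.η i1 i2‖ + |P.τ i1 i2 - P'.τ i1 i2| + |P.ν i1 i2 - P'.ν i1 i2|) = W + E := by
    simp only [W, E, ← Finset.sum_add_distrib]
    exact Finset.sum_congr rfl fun _ _ => by ring
  calc |P.groupPDF i1 x y - P'.groupPDF i1 x y|
      ≤ k2 * (2 * gaussConst ℓ *
            ∑ j, |(⟪P.ω i1 j, x⟫ + P.β i1 j) - (⟪P'.ω i1 j, x⟫ + P'.β i1 j)|) +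
          ∑ i2, |gaussPDF (⟪P.η i1 i2, x⟫ + P.τ i1 i2) (P.ν i1 i2) y -
            gaussPDF (⟪P'.η i1 i2, x⟫ + P'.τ i1 i2) (P'.ν i1 i2) y| := by
        simpa only [groupPDF, Fintype.card_fin] using abs_sum_softmax_mul_sub_le _ _ _ _
          fun i2 => abs_gaussPDF_le hℓ (hν i1 i2)
    _ ≤ k2 * (2 * gaussConst ℓ * ((‖x‖ + 1) * W)) +
          ∑ i2, gaussConst ℓ * (‖x‖ + 1) * (‖P.η i1 i2 - P'.η i1 i2‖ +
            |P.τ i1 i2 - P'.τ i1 i2| + |P.ν i1 i2 - P'.ν i1 i2|) := by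
        gcongr with i2
        · exact sum_abs_inner_add_sub_le _ _ _ _ x
        · exact abs_expert_sub_le P P' hℓ hν hν' i1 i2 x y
    _ = k2 * (2 * gaussConst ℓ * ((‖x‖ + 1) * W)) + gaussConst ℓ * (‖x‖ + 1) * E := by
        congr 1; exact (Finset.mul_sum _ _ _).symm
    _ ≤ gaussConst ℓ * (2 * k2 + 1) * (‖x‖ + 1) * (W + E) := by
        have hLs := mul_pos hL hs
        nlinarith [mul_nonneg hLs.le hW, mul_nonneg (mul_nonneg hLs.le hE) (Nat.cast_nonneg k2)]
    _ = _ := by rw [hsum]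

theorem abs_pSS_sub_le (P P' : HMoE d k1 k2) (hℓ : 0 < ℓ) (hν : ∀ i1 i2, ℓ ≤ P.ν i1 i2)
    (hν' : ∀ i1 i2, ℓ ≤ P'.ν i1 i2) (x : Euc d) (y : ℝ) :
    |pSS P x y - pSS P' x y| ≤
      gaussConst ℓ * (2 * (k1 + k2) + 1) * (‖x‖ + 1) * P.paramDist P' := by
  have hL := gaussConst_pos hℓ
  have hs : 0 < ‖x‖ + 1 := by positivity
  unfold paramDist
  set A := ∑ i1, (‖P.a i1 - P'.a i1‖ + |P.b i1 - P'.b i1|)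
  set S := ∑ i1, ∑ i2, (‖P.ω i1 i2 - P'.ω i1 i2‖ + |P.β i1 i2 - P'.β i1 i2| +
      ‖P.η i1 i2 - P'.η i1 i2‖ + |P.τ i1 i2 - P'.τ i1 i2| + |P.ν i1 i2 - P'.ν i1 i2|)
  have hA : 0 ≤ A := Finset.sum_nonneg fun _ _ => by positivity
  have hS : 0 ≤ S := Finset.sum_nonneg fun _ _ => Finset.sum_nonneg fun _ _ => by positivity
  rw [pSS_eq_sum_groupPDF, pSS_eq_sum_groupPDF]
  calc _ ≤ k1 * (2 * gaussConst ℓ *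
            ∑ j, |(⟪P.a j, x⟫ + P.b j) - (⟪P'.a j, x⟫ + P'.b j)|) +
          ∑ i1, |P.groupPDF i1 x y - P'.groupPDF i1 x y| := by
        simpa only [Fintype.card_fin] using abs_sum_softmax_mul_sub_le _ _ _ _
          fun i1 => P.abs_groupPDF_le hℓ hν i1 x y
    _ ≤ k1 * (2 * gaussConst ℓ * ((‖x‖ + 1) * A)) +
          ∑ i1, gaussConst ℓ * (2 * k2 + 1) * (‖x‖ + 1) *
            ∑ i2, (‖P.ω i1 i2 - P'.ω i1 i2‖ + |P.β i1 i2 - P'.β i1 i2| +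
              ‖P.η i1 i2 - P'.η i1 i2‖ + |P.τ i1 i2 - P'.τ i1 i2| + |P.ν i1 i2 - P'.ν i1 i2|) := by
        gcongr with i1
        · exact sum_abs_inner_add_sub_le _ _ _ _ x
        · exact abs_groupPDF_sub_le P P' hℓ hν hν' i1 x y
    _ = k1 * (2 * gaussConst ℓ * ((‖x‖ + 1) * A)) +
          gaussConst ℓ * (2 * k2 + 1) * (‖x‖ + 1) * S := by
        congr 1; exact (Finset.mul_sum _ _ _).symm
    _ ≤ gaussConst ℓ * (2 * (k1 + k2) + 1) * (‖x‖ + 1) * (A + S) := by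
        have hLs := mul_pos hL hs
        nlinarith [mul_nonneg hLs.le hA, mul_nonneg (mul_nonneg hLs.le hS) (Nat.cast_nonneg k1),
          mul_nonneg (mul_nonneg hLs.le hA) (Nat.cast_nonneg k2)]

end HMoE

theorem pSS_param_perturbation_general (d k1 k2 : ℕ) (B K ℓ u : ℝ)
    (hB : 0 < B) (hℓ : 0 < ℓ) :
    ∃ C : ℝ, 0 < C ∧
      ∀ P P' : HMoE d k1 k2,
      (∀ i1, ‖P.a i1‖ ≤ K ∧ |P.b i1| ≤ K) →
      (∀ i1, ‖P'.a i1‖ ≤ K ∧ |P'.b i1| ≤ K) →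
      (∀ i1 i2, ‖P.ω i1 i2‖ ≤ K ∧ |P.β i1 i2| ≤ K ∧ ‖P.η i1 i2‖ ≤ K ∧ |P.τ i1 i2| ≤ K) →
      (∀ i1 i2, ‖P'.ω i1 i2‖ ≤ K ∧ |P'.β i1 i2| ≤ K ∧ ‖P'.η i1 i2‖ ≤ K ∧ |P'.τ i1 i2| ≤ K) →
      (∀ i1 i2, P.ν i1 i2 ∈ Set.Icc ℓ u) → (∀ i1 i2, P'.ν i1 i2 ∈ Set.Icc ℓ u) →
      ∀ (x : Euc d) (y : ℝ), ‖x‖ ≤ B →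
        |pSS P x y - pSS P' x y| ≤
          C * ((∑ i1, (‖P.a i1 - P'.a i1‖ + |P.b i1 - P'.b i1|)) +
            ∑ i1, ∑ i2, (‖P.ω i1 i2 - P'.ω i1 i2‖ + |P.β i1 i2 - P'.β i1 i2| +
              ‖P.η i1 i2 - P'.η i1 i2‖ + |P.τ i1 i2 - P'.τ i1 i2| +
              |P.ν i1 i2 - P'.ν i1 i2|)) := by
  have hL := gaussConst_pos hℓ
  refine ⟨gaussConst ℓ * (2 * (k1 + k2) + 1) * (B + 1), by positivity, ?_⟩
  intro P P' _ _ _ _ hν hν' x y hx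
  calc |pSS P x y - pSS P' x y|
      ≤ gaussConst ℓ * (2 * (k1 + k2) + 1) * (‖x‖ + 1) * P.paramDist P' :=
        P.abs_pSS_sub_le P' hℓ (fun i1 i2 => (hν i1 i2).1) (fun i1 i2 => (hν' i1 i2).1) x y
    _ ≤ gaussConst ℓ * (2 * (k1 + k2) + 1) * (B + 1) * P.paramDist P' := by
        gcongr
        exact P.paramDist_nonneg P'

/-- Parameter-perturbation bound for the Softmax–Softmax Gaussian HMoE density. -/
theorem pSS_param_perturbation (d k1 k2 : ℕ) (B K ℓ u : ℝ)
    (hB : 0 < B) (hK : 0 < K) (hℓ : 0 < ℓ) (hℓu : ℓ ≤ u) :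
    ∃ C : ℝ, 0 < C ∧
      ∀ P P' : HMoE d k1 k2,
      (∀ i1, ‖P.a i1‖ ≤ K ∧ |P.b i1| ≤ K) →
      (∀ i1, ‖P'.a i1‖ ≤ K ∧ |P'.b i1| ≤ K) →
      (∀ i1 i2, ‖P.ω i1 i2‖ ≤ K ∧ |P.β i1 i2| ≤ K ∧ ‖P.η i1 i2‖ ≤ K ∧ |P.τ i1 i2| ≤ K) →
      (∀ i1 i2, ‖P'.ω i1 i2‖ ≤ K ∧ |P'.β i1 i2| ≤ K ∧ ‖P'.η i1 i2‖ ≤ K ∧ |P'.τ i1 i2| ≤ K) →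
      (∀ i1 i2, P.ν i1 i2 ∈ Set.Icc ℓ u) → (∀ i1 i2, P'.ν i1 i2 ∈ Set.Icc ℓ u) →
      ∀ (x : Euc d) (y : ℝ), ‖x‖ ≤ B →
        |pSS P x y - pSS P' x y| ≤
          C * ((∑ i1, (‖P.a i1 - P'.a i1‖ + |P.b i1 - P'.b i1|)) +
            ∑ i1, ∑ i2, (‖P.ω i1 i2 - P'.ω i1 i2‖ + |P.β i1 i2 - P'.β i1 i2| +
              ‖P.η i1 i2 - P'.η i1 i2‖ + |P.τ i1 i2 - P'.τ i1 i2| +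
              |P.ν i1 i2 - P'.ν i1 i2|)) :=
  pSS_param_perturbation_general d k1 k2 B K ℓ u hB hℓ
end
end
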